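/- For each of the four subloops S_L, S_L^α, S_L^β, S_L^γ of T_L, the real linear span of the subloop in 𝕋 is a 16-dimensional subalgebra of 𝕋 (closed under multiplication and containing 1), and this subalgebra has zero divisors: it contains nonzero elements u, v with u·v = 0. -/

import Mathlib

/-- Iterated Cayley–Dickson doubling starting from `ℝ`. -/
def CD : ℕ → Type
  | 0 => ℝ
  | n + 1 => CD n × CD n

instance cdAddCommGroup : ∀ n, AddCommGroup (CD n)
  | 0 => inferInstanceAs (AddCommGroup ℝ)
  | n + 1 => letI := cdAddCommGroup n; inferInstanceAs (AddCommGroup (CD n × CD n))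

noncomputable instance cdModule : ∀ n, Module ℝ (CD n)
  | 0 => inferInstanceAs (Module ℝ ℝ)
  | n + 1 => letI := cdModule n; inferInstanceAs (Module ℝ (CD n × CD n))

/-- Cayley–Dickson conjugation, starting from the identity on `ℝ`. -/
def cdConj : ∀ n, CD n → CD n
  | 0, x => x
  | n + 1, x => (cdConj n x.1, -x.2)

/-- Cayley–Dickson multiplication: `(a,b)(c,d) = (ac − d b̄, ā d + c b)`. -/
def cdMul : ∀ n, CD n → CD n → CD n
  | 0, x, y => @Mul.mul ℝ _ x y
  | n + 1, x, y =>
      (cdMul n x.1 y.1 - cdMul n y.2 (cdConj n x.2),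
       cdMul n (cdConj n x.1) y.2 + cdMul n y.1 x.2)

instance cdMulInst (n : ℕ) : Mul (CD n) := ⟨cdMul n⟩

instance cdOne : ∀ n, One (CD n)
  | 0 => ⟨(1 : ℝ)⟩
  | n + 1 => letI := cdOne n; ⟨((1 : CD n), 0)⟩

/-- The standard basis elements: under a doubling step `A → A × A`, a basis element
`e k` of `A` gives `e k = (e k, 0)` and `e (k + dim A) = (0, e k)`. -/
def cdE : ∀ n, ℕ → CD n
  | 0, _ => (1 : ℝ)
  | n + 1, k => if k < 2 ^ n then (cdE n k, 0) else (0, cdE n (k - 2 ^ n))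

/-- The trigintaduonions: the 32-dimensional real Cayley–Dickson algebra. -/
abbrev TT := CD 5

/-- The 32 standard basis elements `e 0 = 1, e 1, …, e 31` of `𝕋`. -/
def e (i : ℕ) : TT := cdE 5 i

/-- The trigintaduonion loop `T_L = {±e 0, ±e 1, …, ±e 31}`. -/
def TL : Set TT := {x | ∃ i < 32, x = e i ∨ x = -e i}

/-- A subloop of `T_L`: a nonempty subset of `T_L` closed under multiplication. -/
def IsSubloop (N : Set TT) : Prop :=
  N ⊆ TL ∧ N.Nonempty ∧ ∀ x ∈ N, ∀ y ∈ N, x * y ∈ N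

/-- Two subsets of `T_L` are isomorphic (as loops) if some bijection between them
preserves multiplication. -/
def LoopIso (A B : Set TT) : Prop :=
  ∃ f : TT → TT, Set.BijOn f A B ∧ ∀ x ∈ A, ∀ y ∈ A, f (x * y) = f x * f y

/-- The standard sedenion loop `S_L = {±e i : 0 ≤ i ≤ 15}`. -/
def SL : Set TT := {x | ∃ i < 16, x = e i ∨ x = -e i}

/-- Index set of the α-sedenion loop. -/
def idxα : Set ℕ := {0, 1, 2, 3, 8, 9, 10, 11, 20, 21, 22, 23, 28, 29, 30, 31}

/-- Index set of the β-sedenion loop. -/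
def idxβ : Set ℕ := {0, 1, 2, 3, 12, 13, 14, 15, 20, 21, 22, 23, 24, 25, 26, 27}

/-- Index set of the γ-sedenion loop. -/
def idxγ : Set ℕ := {0, 1, 2, 3, 4, 5, 6, 7, 24, 25, 26, 27, 28, 29, 30, 31}

/-- The α-sedenion loop `S_L^α`. -/
def SLα : Set TT := {x | ∃ i ∈ idxα, x = e i ∨ x = -e i}

/-- The β-sedenion loop `S_L^β`. -/
def SLβ : Set TT := {x | ∃ i ∈ idxβ, x = e i ∨ x = -e i}

/-- The γ-sedenion loop `S_L^γ`. -/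
def SLγ : Set TT := {x | ∃ i ∈ idxγ, x = e i ∨ x = -e i}

/-- The octonion loop `O_L = {±e i : 0 ≤ i ≤ 7}`. -/
def OL : Set TT := {x | ∃ i < 8, x = e i ∨ x = -e i}

/-- The quasi-octonion loop `Õ_L = {±e i : i ∈ {0,1,2,3,12,13,14,15}}`. -/
def QOL : Set TT :=
  {x | ∃ i ∈ ({0, 1, 2, 3, 12, 13, 14, 15} : Set ℕ), x = e i ∨ x = -e i}

/-!
A product of two standard basis elements of a Cayley–Dickson algebra is a signed basis element:
`e i * e j = ± e (i ^^^ j)`, the sign being computed by a recursion along the doubling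
(`cdSign`). Hence the span of `{± e i : i ∈ I}` is closed under multiplication as soon as the
index set `I` is closed under `^^^`, and it contains `1 = e 0` when `0 ∈ I`. Its dimension is
`#I` because the `e i` are linearly independent, as the coordinate functionals show. Finally
`(e a + e b) * (e c - e d) = 0` whenever `a ^^^ c = b ^^^ d` and the signs of `e a * e c` and
`e b * e d`, and of `e a * e d` and `e b * e c`, agree; for each of the four loops the index set
and such `a, b, c, d` are checked by evaluation.
-/

open Submodule

theorem Nat.add_two_pow_eq_xor {x n : ℕ} (hx : x < 2 ^ n) : x + 2 ^ n = x ^^^ 2 ^ n := by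
  rw [← Nat.or_two_pow_eq_add_of_lt hx]
  apply Nat.eq_of_testBit_eq
  intro i
  simp only [Nat.testBit_xor, Nat.testBit_or, Nat.testBit_two_pow]
  rcases eq_or_ne n i with rfl | h
  · simp [Nat.testBit_lt_two_pow hx]
  · simp [h]

theorem Nat.xor_add_two_pow {x y n : ℕ} (hx : x < 2 ^ n) (hy : y < 2 ^ n) :
    x ^^^ (y + 2 ^ n) = (x ^^^ y) + 2 ^ n := by
  rw [Nat.add_two_pow_eq_xor hy, ← Nat.xor_assoc,
    ← Nat.add_two_pow_eq_xor (Nat.xor_lt_two_pow hx hy)]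

theorem Nat.add_two_pow_xor {x y n : ℕ} (hx : x < 2 ^ n) (hy : y < 2 ^ n) :
    (x + 2 ^ n) ^^^ y = (x ^^^ y) + 2 ^ n := by
  rw [Nat.xor_comm, Nat.xor_add_two_pow hy hx, Nat.xor_comm]

theorem Nat.add_two_pow_xor_add_two_pow {x y n : ℕ} (hx : x < 2 ^ n) (hy : y < 2 ^ n) :
    (x + 2 ^ n) ^^^ (y + 2 ^ n) = x ^^^ y := by
  rw [Nat.add_two_pow_eq_xor hx, Nat.add_two_pow_eq_xor hy]
  simp [Nat.xor_left_comm, Nat.xor_comm]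

theorem Submodule.span_setOf_eq_or_eq_neg {R M ι : Type*} [Ring R] [AddCommGroup M] [Module R M]
    (v : ι → M) (s : Set ι) :
    span R {x | ∃ i ∈ s, x = v i ∨ x = -v i} = span R (v '' s) := by
  have : {x | ∃ i ∈ s, x = v i ∨ x = -v i} = v '' s ∪ -(v '' s) := by
    ext x
    simp only [Set.mem_ofPred_eq, Set.mem_union, Set.mem_image, Set.mem_neg]
    grind
  rw [this, span_union, span_neg, sup_idem]

theorem Submodule.apply_mem_span_of_mem_span {R M : Type*} [CommSemiring R] [AddCommMonoid M]
    [Module R M] (f : M →ₗ[R] M →ₗ[R] M) {s : Set M} (hs : ∀ x ∈ s, ∀ y ∈ s, f x y ∈ span R s)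
    {u v : M} (hu : u ∈ span R s) (hv : v ∈ span R s) : f u v ∈ span R s := by
  refine span_le.2 ?_ (map₂_span_span R f s s ▸ apply_mem_map₂ f hu hv)
  rintro _ ⟨x, hx, y, hy, rfl⟩
  exact hs x hx y hy

-- Typed as `CD (n + 1)`, so that `*` on these pairs is the Cayley–Dickson product and not the
-- componentwise product of `CD n × CD n`.
abbrev CD.mk {n : ℕ} (a b : CD n) : CD (n + 1) := (a, b)

section CayleyDickson

variable {n : ℕ}

theorem CD.mk_mul_mk (a b c d : CD n) :
    CD.mk a b * CD.mk c d = CD.mk (a * c - d * cdConj n b) (cdConj n a * d + c * b) := rfl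

theorem CD.mk_add_mk (a b c d : CD n) : CD.mk a b + CD.mk c d = CD.mk (a + c) (b + d) := rfl

theorem CD.smul_mk (r : ℝ) (a b : CD n) : r • CD.mk a b = CD.mk (r • a) (r • b) := rfl

theorem CD.zsmul_mk (k : ℤ) (a b : CD n) : k • CD.mk a b = CD.mk (k • a) (k • b) := rfl

theorem cdConj_mk (a b : CD n) : cdConj (n + 1) (CD.mk a b) = CD.mk (cdConj n a) (-b) := rfl

theorem cdConj_linear : ∀ n (r : ℝ) (x y : CD n),
    cdConj n (r • x + y) = r • cdConj n x + cdConj n y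
  | 0, _, _, _ => rfl
  | n + 1, r, (x₁, x₂), (y₁, y₂) => by
      rw [CD.smul_mk, CD.mk_add_mk, cdConj_mk, cdConj_mk, cdConj_mk, cdConj_linear n,
        CD.smul_mk, CD.mk_add_mk, smul_neg, neg_add]

theorem cdConj_zero : cdConj n 0 = 0 := by
  simpa using cdConj_linear n 1 0 0

-- Left and right linearity are proved together: the components of the doubled product use the
-- product on `CD n` with its arguments in both orders.
theorem CD.mul_linear : ∀ n (r : ℝ) (x y z : CD n),
    (r • x + y) * z = r • (x * z) + y * z ∧ z * (r • x + y) = r • (z * x) + z * y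
  | 0, r, x, y, z => (show ∀ r x y z : ℝ, (r * x + y) * z = r * (x * z) + y * z ∧
      z * (r * x + y) = r * (z * x) + z * y from fun _ _ _ _ => ⟨by ring, by ring⟩) r x y z
  | n + 1, r, (x₁, x₂), (y₁, y₂), (z₁, z₂) => by
      have hl := fun r x y z => (CD.mul_linear n r x y z).1
      have hr := fun r x y z => (CD.mul_linear n r x y z).2
      simp only [CD.smul_mk, CD.mk_add_mk, CD.mk_mul_mk, cdConj_linear, hl, hr]
      refine ⟨congrArg₂ CD.mk ?_ ?_, congrArg₂ CD.mk ?_ ?_⟩ <;> module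

theorem CD.zero_mul (x : CD n) : 0 * x = 0 := by simpa using (CD.mul_linear n 1 0 0 x).1

theorem CD.mul_zero (x : CD n) : x * 0 = 0 := by simpa using (CD.mul_linear n 1 0 0 x).2

noncomputable def CD.mulₗ (n : ℕ) : CD n →ₗ[ℝ] CD n →ₗ[ℝ] CD n :=
  LinearMap.mk₂ ℝ (· * ·)
    (fun x y z => by simpa using (CD.mul_linear n 1 x y z).1)
    (fun r x z => by simpa [CD.zero_mul] using (CD.mul_linear n r x 0 z).1)
    (fun z x y => by simpa using (CD.mul_linear n 1 x y z).2)
    (fun r z x => by simpa [CD.mul_zero] using (CD.mul_linear n r x 0 z).2)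

theorem CD.zsmul_mul (k : ℤ) (x y : CD n) : (k • x) * y = k • (x * y) :=
  map_zsmul ((CD.mulₗ n).flip y) k x

theorem CD.mul_zsmul (k : ℤ) (x y : CD n) : x * (k • y) = k • (x * y) :=
  map_zsmul (CD.mulₗ n x) k y

theorem CD.mk_zero_mul_mk_zero (a c : CD n) : CD.mk a 0 * CD.mk c 0 = CD.mk (a * c) 0 := by
  simp only [CD.mk_mul_mk, cdConj_zero, CD.mul_zero, sub_zero, add_zero]

theorem CD.mk_zero_mul_zero_mk (a d : CD n) : CD.mk a 0 * CD.mk 0 d = CD.mk 0 (cdConj n a * d) := by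
  simp only [CD.mk_mul_mk, cdConj_zero, CD.mul_zero, sub_zero, add_zero]

theorem CD.zero_mk_mul_mk_zero (b c : CD n) : CD.mk 0 b * CD.mk c 0 = CD.mk 0 (c * b) := by
  simp only [CD.mk_mul_mk, cdConj_zero, CD.mul_zero, CD.zero_mul, sub_zero, zero_add]

theorem CD.zero_mk_mul_zero_mk (b d : CD n) :
    CD.mk 0 b * CD.mk 0 d = CD.mk (-(d * cdConj n b)) 0 := by
  simp only [CD.mk_mul_mk, cdConj_zero, CD.mul_zero, CD.zero_mul, zero_sub, add_zero]

theorem cdE_succ_of_lt {k : ℕ} (h : k < 2 ^ n) : cdE (n + 1) k = CD.mk (cdE n k) 0 := if_pos h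

theorem cdE_succ_add_two_pow (k : ℕ) : cdE (n + 1) (k + 2 ^ n) = CD.mk 0 (cdE n k) :=
  (if_neg (Nat.not_lt.2 (Nat.le_add_left _ _))).trans
    (congrArg (fun k => CD.mk 0 (cdE n k)) (Nat.add_sub_cancel k (2 ^ n)))

theorem cdE_zero : ∀ n, cdE n 0 = 1
  | 0 => rfl
  | n + 1 => by rw [cdE_succ_of_lt (by positivity), cdE_zero n]; rfl

def cdConjSign (k : ℕ) : ℤ := if k = 0 then 1 else -1

theorem cdConj_cdE : ∀ {n k : ℕ}, k < 2 ^ n → cdConj n (cdE n k) = cdConjSign k • cdE n k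
  | 0, k, hk => by
      obtain rfl : k = 0 := by simpa using hk
      rw [cdConjSign, if_pos rfl, one_smul]
      rfl
  | n + 1, k, hk => by
      rcases lt_or_ge k (2 ^ n) with h | h
      · rw [cdE_succ_of_lt h, cdConj_mk, cdConj_cdE h, neg_zero, CD.zsmul_mk, smul_zero]
      · obtain ⟨k, rfl⟩ := Nat.exists_eq_add_of_le' h
        rw [cdE_succ_add_two_pow, cdConj_mk, cdConj_zero, cdConjSign, if_neg (by positivity),
          CD.zsmul_mk, smul_zero, neg_one_zsmul]

-- Read off from `CD.mk_zero_mul_mk_zero` and its three siblings, using `cdConj_cdE`.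
def cdSign : ℕ → ℕ → ℕ → ℤ
  | 0, _, _ => 1
  | n + 1, i, j =>
    if i < 2 ^ n then
      if j < 2 ^ n then cdSign n i j else cdConjSign i * cdSign n i (j - 2 ^ n)
    else
      if j < 2 ^ n then cdSign n j (i - 2 ^ n)
      else -(cdConjSign (i - 2 ^ n) * cdSign n (j - 2 ^ n) (i - 2 ^ n))

theorem cdE_mul_cdE : ∀ {n i j : ℕ}, i < 2 ^ n → j < 2 ^ n →
    cdE n i * cdE n j = cdSign n i j • cdE n (i ^^^ j)
  | 0, i, j, hi, hj => by
      obtain ⟨rfl, rfl⟩ : i = 0 ∧ j = 0 := by simp_all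
      rw [cdSign, one_smul]
      show (1 : ℝ) * 1 = 1
      rw [one_mul]
  | n + 1, i, j, hi, hj => by
      rw [pow_succ, mul_two] at hi hj
      rcases lt_or_ge i (2 ^ n) with hi' | hi' <;> rcases lt_or_ge j (2 ^ n) with hj' | hj'
      · rw [cdE_succ_of_lt hi', cdE_succ_of_lt hj', CD.mk_zero_mul_mk_zero, cdE_mul_cdE hi' hj',
          cdE_succ_of_lt (Nat.xor_lt_two_pow hi' hj'), CD.zsmul_mk, smul_zero]
        simp [cdSign, hi', hj']
      · obtain ⟨j, rfl⟩ := Nat.exists_eq_add_of_le' hj'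
        have hj : j < 2 ^ n := by omega
        rw [cdE_succ_of_lt hi', cdE_succ_add_two_pow, CD.mk_zero_mul_zero_mk, cdConj_cdE hi',
          CD.zsmul_mul, cdE_mul_cdE hi' hj, Nat.xor_add_two_pow hi' hj, cdE_succ_add_two_pow,
          CD.zsmul_mk, smul_zero, smul_smul]
        simp [cdSign, hi']
      · obtain ⟨i, rfl⟩ := Nat.exists_eq_add_of_le' hi'
        have hi : i < 2 ^ n := by omega
        rw [cdE_succ_add_two_pow, cdE_succ_of_lt hj', CD.zero_mk_mul_mk_zero, cdE_mul_cdE hj' hi,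
          Nat.add_two_pow_xor hi hj', Nat.xor_comm j, cdE_succ_add_two_pow, CD.zsmul_mk, smul_zero]
        simp [cdSign, hj']
      · obtain ⟨i, rfl⟩ := Nat.exists_eq_add_of_le' hi'
        obtain ⟨j, rfl⟩ := Nat.exists_eq_add_of_le' hj'
        have hi : i < 2 ^ n := by omega
        have hj : j < 2 ^ n := by omega
        rw [cdE_succ_add_two_pow, cdE_succ_add_two_pow, CD.zero_mk_mul_zero_mk, cdConj_cdE hi,
          CD.mul_zsmul, cdE_mul_cdE hj hi, smul_smul, Nat.add_two_pow_xor_add_two_pow hi hj,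
          Nat.xor_comm j, cdE_succ_of_lt (Nat.xor_lt_two_pow hi hj), CD.zsmul_mk, smul_zero,
          ← neg_smul]
        simp [cdSign]

-- The `0` for `j ≠ 0` makes all coordinates of index `≥ 2 ^ n` vanish.
noncomputable def cdCoordₗ : ∀ n, ℕ → CD n →ₗ[ℝ] ℝ
  | 0, j => if j = 0 then LinearMap.id else 0
  | n + 1, j =>
    if j < 2 ^ n then (cdCoordₗ n j).comp (LinearMap.fst ℝ (CD n) (CD n))
    else (cdCoordₗ n (j - 2 ^ n)).comp (LinearMap.snd ℝ (CD n) (CD n))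

theorem cdCoordₗ_mk_of_lt {n j : ℕ} (hj : j < 2 ^ n) (a b : CD n) :
    cdCoordₗ (n + 1) j (CD.mk a b) = cdCoordₗ n j a := by
  rw [cdCoordₗ, if_pos hj]
  rfl

theorem cdCoordₗ_mk_of_ge {n j : ℕ} (hj : 2 ^ n ≤ j) (a b : CD n) :
    cdCoordₗ (n + 1) j (CD.mk a b) = cdCoordₗ n (j - 2 ^ n) b := by
  rw [cdCoordₗ, if_neg (by omega)]
  rfl

theorem cdCoordₗ_cdE : ∀ {n i : ℕ}, i < 2 ^ n → ∀ j,
    cdCoordₗ n j (cdE n i) = if j = i then 1 else 0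
  | 0, i, hi, j => by
      obtain rfl : i = 0 := by simpa using hi
      by_cases hj : j = 0
      · simp only [cdCoordₗ, hj, if_true]
        rfl
      · simp [cdCoordₗ, hj]
  | n + 1, i, hi, j => by
      rw [pow_succ, mul_two] at hi
      rcases lt_or_ge i (2 ^ n) with hi' | hi' <;> rcases lt_or_ge j (2 ^ n) with hj | hj
      · rw [cdE_succ_of_lt hi', cdCoordₗ_mk_of_lt hj, cdCoordₗ_cdE hi']
      · rw [cdE_succ_of_lt hi', cdCoordₗ_mk_of_ge hj, map_zero, if_neg (by omega)]
      · obtain ⟨i, rfl⟩ := Nat.exists_eq_add_of_le' hi'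
        rw [cdE_succ_add_two_pow, cdCoordₗ_mk_of_lt hj, map_zero, if_neg (by omega)]
      · obtain ⟨i, rfl⟩ := Nat.exists_eq_add_of_le' hi'
        rw [cdE_succ_add_two_pow, cdCoordₗ_mk_of_ge hj, cdCoordₗ_cdE (by omega)]
        grind

theorem linearIndepOn_cdE (n : ℕ) : LinearIndepOn ℝ (cdE n) (Set.Iio (2 ^ n)) := by
  refine LinearIndepOn.of_comp (LinearMap.pi (cdCoordₗ n)) ?_
  refine ((Pi.linearIndependent_single_one ℕ ℝ).linearIndepOn _).congr fun i hi => ?_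
  ext j
  simp [cdCoordₗ_cdE hi, Pi.single_apply]

theorem finrank_span_cdE_image (I : Finset ℕ) (hI : ∀ i ∈ I, i < 2 ^ n) :
    Module.finrank ℝ (span ℝ (cdE n '' I)) = I.card := by
  have hli : LinearIndepOn ℝ (cdE n) I := (linearIndepOn_cdE n).mono fun i hi => hI i hi
  rw [Set.image_eq_range, finrank_span_eq_card hli]
  simp

theorem mul_mem_span_cdE_image {I : Set ℕ} (hI : ∀ i ∈ I, i < 2 ^ n)
    (hxor : ∀ i ∈ I, ∀ j ∈ I, i ^^^ j ∈ I) {u v : CD n} (hu : u ∈ span ℝ (cdE n '' I))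
    (hv : v ∈ span ℝ (cdE n '' I)) : u * v ∈ span ℝ (cdE n '' I) := by
  refine apply_mem_span_of_mem_span (CD.mulₗ n) ?_ hu hv
  rintro _ ⟨i, hi, rfl⟩ _ ⟨j, hj, rfl⟩
  show cdE n i * cdE n j ∈ _
  rw [cdE_mul_cdE (hI i hi) (hI j hj)]
  exact zsmul_mem (subset_span (Set.mem_image_of_mem _ (hxor i hi j hj))) _

theorem cdE_add_cdE_mul_cdE_sub_cdE {a b c d : ℕ} (ha : a < 2 ^ n) (hb : b < 2 ^ n)
    (hc : c < 2 ^ n) (hd : d < 2 ^ n) (hac : a ^^^ c = b ^^^ d)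
    (hs₁ : cdSign n a c = cdSign n b d) (hs₂ : cdSign n a d = cdSign n b c) :
    (cdE n a + cdE n b) * (cdE n c - cdE n d) = 0 := by
  have had : a ^^^ d = b ^^^ c := by
    calc a ^^^ d = (a ^^^ c) ^^^ (c ^^^ d) := by simp [Nat.xor_left_comm, Nat.xor_comm]
      _ = b ^^^ c := by simp [hac, Nat.xor_left_comm, Nat.xor_comm]
  change CD.mulₗ n (cdE n a + cdE n b) (cdE n c - cdE n d) = 0
  simp only [map_add, map_sub, LinearMap.add_apply]
  change cdE n a * cdE n c + cdE n b * cdE n c - (cdE n a * cdE n d + cdE n b * cdE n d) = 0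
  rw [cdE_mul_cdE ha hc, cdE_mul_cdE ha hd, cdE_mul_cdE hb hc, cdE_mul_cdE hb hd, hac, had, hs₁,
    hs₂]
  abel

theorem smul_cdE_add_smul_cdE_ne_zero {a b : ℕ} (ha : a < 2 ^ n) (hb : b < 2 ^ n) (hab : a ≠ b)
    {s t : ℝ} (hs : s ≠ 0) : s • cdE n a + t • cdE n b ≠ 0 := fun h =>
  hs ((LinearIndepOn.pair_iff _ hab).1
    ((linearIndepOn_cdE n).mono (by simp [Set.insert_subset_iff, ha, hb])) s t h).1

end CayleyDickson

theorem span_pm_e_of_xorClosed (s : Set ℕ) (I : Finset ℕ) (hsI : (I : Set ℕ) = s)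
    (V : Submodule ℝ TT) (hV : V = span ℝ {x | ∃ i ∈ s, x = e i ∨ x = -e i})
    (hcard : I.card = 16) (hI : ∀ i ∈ I, i < 2 ^ 5) (h0 : 0 ∈ I)
    (hxor : ∀ i ∈ I, ∀ j ∈ I, i ^^^ j ∈ I) (a b c d : ℕ)
    (habcd : a ∈ I ∧ b ∈ I ∧ c ∈ I ∧ d ∈ I ∧ a ≠ b ∧ c ≠ d ∧ a ^^^ c = b ^^^ d ∧
      cdSign 5 a c = cdSign 5 b d ∧ cdSign 5 a d = cdSign 5 b c) :
    Module.finrank ℝ V = 16 ∧ (∀ u ∈ V, ∀ v ∈ V, u * v ∈ V) ∧ (1 : TT) ∈ V ∧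
      ∃ u ∈ V, ∃ v ∈ V, u ≠ 0 ∧ v ≠ 0 ∧ u * v = 0 := by
  obtain ⟨ha, hb, hc, hd, hab, hcd, hac, hs₁, hs₂⟩ := habcd
  replace hV : V = span ℝ (cdE 5 '' I) := by
    rw [hV, ← hsI]
    exact span_setOf_eq_or_eq_neg (cdE 5) I
  have hmem {i : ℕ} (hi : i ∈ I) : cdE 5 i ∈ span ℝ (cdE 5 '' I) :=
    subset_span (Set.mem_image_of_mem _ hi)
  rw [hV]
  refine ⟨(finrank_span_cdE_image I hI).trans hcard,
    fun u hu v hv => mul_mem_span_cdE_image hI hxor hu hv, cdE_zero 5 ▸ hmem h0,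
    _, add_mem (hmem ha) (hmem hb), _, sub_mem (hmem hc) (hmem hd), ?_, ?_,
    cdE_add_cdE_mul_cdE_sub_cdE (hI a ha) (hI b hb) (hI c hc) (hI d hd) hac hs₁ hs₂⟩
  · simpa using smul_cdE_add_smul_cdE_ne_zero (hI a ha) (hI b hb) hab (s := 1) (t := 1) one_ne_zero
  · simpa [sub_eq_add_neg] using
      smul_cdE_add_smul_cdE_ne_zero (hI c hc) (hI d hd) hcd (s := 1) (t := -1) one_ne_zero

/-- The real linear span of each of `S_L, S_L^α, S_L^β, S_L^γ` is a 16-dimensional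
subalgebra of `𝕋` (closed under multiplication and containing 1) having zero
divisors. -/
theorem stmt19 :
    ∀ S ∈ ({SL, SLα, SLβ, SLγ} : Set (Set TT)),
      Module.finrank ℝ (Submodule.span ℝ S) = 16 ∧
      (∀ u ∈ Submodule.span ℝ S, ∀ v ∈ Submodule.span ℝ S,
        u * v ∈ Submodule.span ℝ S) ∧
      (1 : TT) ∈ Submodule.span ℝ S ∧
      (∃ u ∈ Submodule.span ℝ S, ∃ v ∈ Submodule.span ℝ S,
        u ≠ 0 ∧ v ≠ 0 ∧ u * v = 0) := by
  intro S hS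
  simp only [Set.mem_insert_iff, Set.mem_singleton_iff] at hS
  rcases hS with rfl | rfl | rfl | rfl
  · exact span_pm_e_of_xorClosed (Set.Iio 16) (Finset.range 16) (Finset.coe_range 16) _ rfl
      (by decide +kernel) (by decide +kernel) (by decide +kernel) (by decide +kernel)
      1 10 4 15 (by decide +kernel)
  · exact span_pm_e_of_xorClosed idxα {0, 1, 2, 3, 8, 9, 10, 11, 20, 21, 22, 23, 28, 29, 30, 31}
      (by simp [idxα]) _ rfl (by decide +kernel) (by decide +kernel) (by decide +kernel)
      (by decide +kernel) 1 10 20 31 (by decide +kernel)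
  · exact span_pm_e_of_xorClosed idxβ {0, 1, 2, 3, 12, 13, 14, 15, 20, 21, 22, 23, 24, 25, 26, 27}
      (by simp [idxβ]) _ rfl (by decide +kernel) (by decide +kernel) (by decide +kernel)
      (by decide +kernel) 1 12 3 14 (by decide +kernel)
  · exact span_pm_e_of_xorClosed idxγ {0, 1, 2, 3, 4, 5, 6, 7, 24, 25, 26, 27, 28, 29, 30, 31}
      (by simp [idxγ]) _ rfl (by decide +kernel) (by decide +kernel) (by decide +kernel)
      (by decide +kernel) 1 24 3 26 (by decide +kernel)
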